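/- arXiv:1408.3962 — 2 statements merged into one kernel-verified Lean document; each statement's English description precedes it below -/
import Mathlib

section
/- Let G be a connected multigraph with a chosen root q, and let (<, A) be a q-connected pair: a spanning tree T oriented away from q whose edges are labeled 1,…,n−1 so that each tree edge is smaller than its descendants, extended arbitrarily to a total order and full orientation of all edges. Then a full orientation of G is cut minimal with respect to (<, A) if and only if it is q-connected, i.e., every directed cut is oriented away from q (equivalently, every vertex is reachable from q by a directed path). -/
open Classical

noncomputable section

/-- A finite multigraph, given by a finite vertex type, a finite edge type, and
two endpoint maps (which also provide a built-in reference direction for each edge). -/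
structure Multigraph where
  V : Type
  E : Type
  [fintypeV : Fintype V]
  [fintypeE : Fintype E]
  fst : E → V
  snd : E → V

attribute [instance] Multigraph.fintypeV Multigraph.fintypeE

namespace Multigraph

variable (G : Multigraph)

/-- Adjacency between vertices using only edges in `S`. -/
def adjOn (S : Set G.E) (u v : G.V) : Prop :=
  ∃ e ∈ S, (G.fst e = u ∧ G.snd e = v) ∨ (G.fst e = v ∧ G.snd e = u)

/-- Reachability (in the undirected sense) using only edges in `S`. -/
def reachOn (S : Set G.E) : G.V → G.V → Prop :=
  Relation.ReflTransGen (G.adjOn S)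

def Connected : Prop := ∀ u v : G.V, G.reachOn Set.univ u v

def IsLoop (e : G.E) : Prop := G.fst e = G.snd e

def IsBridge (e : G.E) : Prop := ¬ G.reachOn {f | f ≠ e} (G.fst e) (G.snd e)

/-- Number of connected components of the spanning subgraph with edge set `S`. -/
def comps (S : Set G.E) : ℕ := Nat.card (Quot (G.reachOn S))

/-- Rank of an edge set: `|V|` minus the number of components it spans. -/
def rk (S : Set G.E) : ℕ := Fintype.card G.V - G.comps S

/-- The Tutte polynomial, via the corank-nullity (subgraph) expansion. -/
def tutte (x y : ℚ) : ℚ :=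
  ∑ S : Finset G.E,
    (x - 1) ^ (G.rk Set.univ - G.rk (↑S : Set G.E)) * (y - 1) ^ (S.card - G.rk (↑S : Set G.E))

/-- The genus (cycle rank) `|E| - |V| + 1` of a connected multigraph. -/
def genus : ℕ := Fintype.card G.E + 1 - Fintype.card G.V

/-- A partial orientation: each edge is unoriented (`none`), oriented in the reference
direction `fst → snd` (`some true`), or oriented oppositely (`some false`). -/
abbrev PartialOrientation := G.E → Option Bool

/-- The tail of edge `e` traversed in direction `b` (`true` = `fst → snd`). -/
def dtail (e : G.E) (b : Bool) : G.V := if b then G.fst e else G.snd e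

/-- The head of edge `e` traversed in direction `b` (`true` = `fst → snd`). -/
def dhead (e : G.E) (b : Bool) : G.V := if b then G.snd e else G.fst e

/-- Directed adjacency under a partial orientation. -/
def dAdj (O : G.PartialOrientation) (u v : G.V) : Prop :=
  ∃ e b, O e = some b ∧ G.dtail e b = u ∧ G.dhead e b = v

/-- Directed reachability under a partial orientation. -/
def dReach (O : G.PartialOrientation) : G.V → G.V → Prop :=
  Relation.ReflTransGen (G.dAdj O)

/-- A partial orientation is acyclic iff it contains no directed cycle, equivalently there
is no oriented edge together with a directed path from its head back to its tail. -/
def Acyclic (O : G.PartialOrientation) : Prop :=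
  ¬ ∃ e b, O e = some b ∧ G.dReach O (G.dhead e b) (G.dtail e b)

/-- `e` crosses the cut determined by the vertex set `X`. -/
def crosses (X : Set G.V) (e : G.E) : Prop := ¬ ((G.fst e ∈ X) ↔ (G.snd e ∈ X))

/-- `(X, Xᶜ)` is a directed cut of `O`: the cut is nonempty and every crossing edge is
oriented from `X` to `Xᶜ`. -/
def IsDirCut (O : G.PartialOrientation) (X : Set G.V) : Prop :=
  (∃ e, G.crosses X e) ∧
  ∀ e, G.crosses X e →
    (G.fst e ∈ X → O e = some true) ∧ (G.snd e ∈ X → O e = some false)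

/-- A partial orientation is strongly connected iff it contains no directed cut. -/
def StronglyConnected (O : G.PartialOrientation) : Prop :=
  ¬ ∃ X, G.IsDirCut O X

/-- A directed cycle of `O`: a nonempty cyclically chained list of oriented steps using
pairwise distinct edges, each oriented in `O` as traversed. -/
def IsDCycle (O : G.PartialOrientation) (c : List (G.E × Bool)) : Prop :=
  c ≠ [] ∧ (∀ s ∈ c, O s.1 = some s.2) ∧
  List.Chain' (fun s t => G.dhead s.1 s.2 = G.dtail t.1 t.2) (c ++ c.take 1) ∧
  (c.map Prod.fst).Nodup

/-- A half-open path: a directed path (all steps but the last oriented in `O`) followed by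
an unoriented edge, imagined with the direction that would extend the path. -/
def IsHalfOpenPath (O : G.PartialOrientation) (p : List (G.E × Bool)) : Prop :=
  2 ≤ p.length ∧
  List.Chain' (fun s t => G.dhead s.1 s.2 = G.dtail t.1 t.2) p ∧
  (p.map Prod.fst).Nodup ∧
  (∀ s ∈ p.dropLast, O s.1 = some s.2) ∧
  ∀ h : p ≠ [], O (p.getLast h).1 = none

/-- `O'` is obtained from `O` by reversing one directed cut. -/
def cutRev (O O' : G.PartialOrientation) : Prop :=
  ∃ X, G.IsDirCut O X ∧ (∀ e, ¬ G.crosses X e → O' e = O e) ∧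
    (∀ e, G.crosses X e → O' e = (O e).map not)

/-- `O'` is obtained from `O` by reversing one directed cycle. -/
def cycleRev (O O' : G.PartialOrientation) : Prop :=
  ∃ c, G.IsDCycle O c ∧ (∀ e, e ∉ c.map Prod.fst → O' e = O e) ∧
    (∀ s ∈ c, O' s.1 = some (!s.2))

/-- `O'` is obtained from `O` by a Jacob's ladder cascade along a half-open path:
the first edge becomes unoriented and all other edges get the reversed direction. -/
def cascade (O O' : G.PartialOrientation) : Prop :=
  ∃ p, G.IsHalfOpenPath O p ∧ (∀ e, e ∉ p.map Prod.fst → O' e = O e) ∧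
    (∀ h : p ≠ [], O' (p.head h).1 = none) ∧
    (∀ s ∈ p.tail, O' s.1 = some (!s.2))

/-- An edge pivot at a vertex `v`: unorient an edge `e'` oriented into `v` and orient a
previously unoriented edge `e` toward `v`. -/
def pivot (O O' : G.PartialOrientation) : Prop :=
  ∃ e e' b b', e ≠ e' ∧ O e = none ∧ O e' = some b' ∧
    G.dhead e b = G.dhead e' b' ∧
    O' e = some b ∧ O' e' = none ∧ ∀ f, f ≠ e → f ≠ e' → O' f = O f

/-- A directed cut of `O` is minimal w.r.t. `(<, A)` if its `<`-minimum crossing edge is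
oriented as in the reference orientation `A`. -/
def MinimalCut [LinearOrder G.E] (A : G.E → Bool) (O : G.PartialOrientation)
    (X : Set G.V) : Prop :=
  ∃ e, G.crosses X e ∧ (∀ e', G.crosses X e' → e ≤ e') ∧ O e = some (A e)

/-- A partial orientation is cut minimal if every directed cut in it is minimal. -/
def CutMinimal [LinearOrder G.E] (A : G.E → Bool) (O : G.PartialOrientation) : Prop :=
  ∀ X, G.IsDirCut O X → G.MinimalCut A O X

/-- A list of steps is minimal w.r.t. `(<, A)` if its `<`-minimum edge is traversed in the
direction given by the reference orientation `A`. -/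
def MinimalSteps [LinearOrder G.E] (A : G.E → Bool) (c : List (G.E × Bool)) : Prop :=
  ∃ s ∈ c, (∀ t ∈ c, s.1 ≤ t.1) ∧ s.2 = A s.1

/-- A partial orientation is cycle minimal if every directed cycle in it is minimal. -/
def CycleMinimal [LinearOrder G.E] (A : G.E → Bool) (O : G.PartialOrientation) : Prop :=
  ∀ c, G.IsDCycle O c → G.MinimalSteps A c

/-- A partial orientation is cycle-path minimal if every directed cycle and every
half-open path in it is minimal. -/
def CyclePathMinimal [LinearOrder G.E] (A : G.E → Bool) (O : G.PartialOrientation) : Prop :=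
  G.CycleMinimal A O ∧ ∀ p, G.IsHalfOpenPath O p → G.MinimalSteps A p

/-- The indegree of a vertex: the number of edges oriented toward it. -/
def indeg (O : G.PartialOrientation) (v : G.V) : ℕ :=
  Nat.card {e : G.E // ∃ b, O e = some b ∧ G.dhead e b = v}

/-- Orient the (previously unoriented) edge `e` in direction `b`. -/
def orient (O : G.PartialOrientation) (e : G.E) (b : Bool) : G.PartialOrientation :=
  fun f => if f = e then some b else O f

/-- Deletion of the edge `e`. -/
def deleteEdge (e : G.E) : Multigraph where
  V := G.V
  E := {f : G.E // f ≠ e}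
  fintypeE := Subtype.fintype _
  fst := fun f => G.fst f.1
  snd := fun f => G.snd f.1

/-- Contraction of the edge `e`: identify its two endpoints and remove `e`. -/
def contractEdge (e : G.E) : Multigraph where
  V := Quot (fun a b => a = G.fst e ∧ b = G.snd e)
  E := {f : G.E // f ≠ e}
  fintypeV := Fintype.ofSurjective (Quot.mk _) (Quot.mk_surjective)
  fintypeE := Subtype.fintype _
  fst := fun f => Quot.mk _ (G.fst f.1)
  snd := fun f => Quot.mk _ (G.snd f.1)

/-- The number of acyclic partial orientations of `G`. -/
def numAcyclic : ℕ := Nat.card {O : G.PartialOrientation // G.Acyclic O}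

/-- The number of strongly connected partial orientations of `G`. -/
def numStrong : ℕ := Nat.card {O : G.PartialOrientation // G.StronglyConnected O}

end Multigraph

/-!
The `<`-minimum edge `e` of a cut lies in `T`, since tree edges come first and `T` meets every
cut. The tree path from `q` to the `A`-tail of `e` cannot use a tree edge crossing the cut: such
an edge would lie above that tail, hence be smaller than `e`. So `A` orients `e` out of the side
of `q`, and a directed cut is minimal exactly when `q` is on its source side. A full orientation
has `q` on the source side of every directed cut iff every vertex is reachable from `q`: the
vertices unreachable from `q` would form the source side of a directed cut.
-/

namespace Multigraph

variable {G : Multigraph}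

section Reach

variable {S : Set G.E} {X : Set G.V} {a b : G.V} {e t : G.E}

lemma adjOn_symm (h : G.adjOn S a b) : G.adjOn S b a := by
  obtain ⟨e, he, h⟩ := h
  exact ⟨e, he, h.symm⟩

lemma reachOn_symm (h : G.reachOn S a b) : G.reachOn S b a :=
  Relation.ReflTransGen.mono (fun _ _ h => adjOn_symm h) _ _ (Relation.ReflTransGen.swap _ _ h)

lemma crosses_compl : G.crosses Xᶜ e ↔ G.crosses X e := by
  simp only [crosses, Set.mem_compl_iff]
  tauto

lemma crosses_of_dtail_mem {c : Bool} (ht : G.dtail e c ∈ X) (hh : G.dhead e c ∉ X) :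
    G.crosses X e := by
  cases c <;> simp_all [crosses, dtail, dhead]

lemma mem_of_reachOn (h : G.reachOn S a b) (hS : ∀ g ∈ S, ¬ G.crosses X g) (ha : a ∈ X) :
    b ∈ X := by
  induction h with
  | refl => exact ha
  | tail _ step ih =>
    obtain ⟨g, hg, hor⟩ := step
    have := hS g hg
    unfold crosses at this
    rcases hor with ⟨rfl, rfl⟩ | ⟨rfl, rfl⟩ <;> tauto

lemma exists_crosses_of_reachOn (h : G.reachOn S a b) (ha : a ∈ X) (hb : b ∉ X) :
    ∃ g ∈ S, G.crosses X g := by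
  by_contra! hS
  exact hb (mem_of_reachOn h hS ha)

lemma not_crosses_setOf_reachOn (he : e ∈ S) : ¬ G.crosses {v | G.reachOn S a v} e := by
  have hadj : G.adjOn S (G.fst e) (G.snd e) := ⟨e, he, Or.inl ⟨rfl, rfl⟩⟩
  exact fun h => h ⟨fun hf => hf.tail hadj, fun hs => hs.tail (adjOn_symm hadj)⟩

lemma reachOn_diff_singleton_of_reachOn (ht : G.reachOn (S \ {t}) (G.fst t) (G.snd t))
    (h : G.reachOn S a b) : G.reachOn (S \ {t}) a b := by
  refine Relation.ReflTransGen.lift' id (fun c d ⟨g, hg, hor⟩ => ?_) _ _ h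
  by_cases hgt : g = t
  · subst hgt
    rcases hor with ⟨rfl, rfl⟩ | ⟨rfl, rfl⟩
    exacts [ht, reachOn_symm ht]
  · exact .single ⟨g, ⟨hg, hgt⟩, hor⟩

/-- Project the walk onto `X`, sending every vertex outside `X` to the endpoint of `t` in `X`. -/
lemma reachOn_diff_singleton_of_crosses (ht : G.crosses X t)
    (hS : ∀ g ∈ S, g ≠ t → ¬ G.crosses X g) (h : G.reachOn S a b) (ha : a ∈ X) (hb : b ∈ X) :
    G.reachOn (S \ {t}) a b := by
  obtain ⟨y, hy⟩ : ∃ y, ∀ z, (z = G.fst t ∨ z = G.snd t) → z ∈ X → z = y := by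
    unfold crosses at ht
    by_cases hf : G.fst t ∈ X
    · exact ⟨G.fst t, fun z hz hzX => by rcases hz with rfl | rfl <;> tauto⟩
    · exact ⟨G.snd t, fun z hz hzX => by rcases hz with rfl | rfl <;> tauto⟩
  let f : G.V → G.V := fun v => if v ∈ X then v else y
  suffices hstep : ∀ c d, G.adjOn S c d → G.reachOn (S \ {t}) (f c) (f d) by
    have := Relation.ReflTransGen.lift' f hstep _ _ h
    simp only [Function.onFun, f, ha, hb, if_true] at this
    exact this
  rintro c d ⟨g, hg, hor⟩
  by_cases hgt : g = t
  · subst hgt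
    have hc : f c = y := by
      by_cases hcX : c ∈ X
      · simpa [f, hcX] using hy c (by rcases hor with ⟨rfl, -⟩ | ⟨-, rfl⟩ <;> simp) hcX
      · simp [f, hcX]
    have hd : f d = y := by
      by_cases hdX : d ∈ X
      · simpa [f, hdX] using hy d (by rcases hor with ⟨-, rfl⟩ | ⟨rfl, -⟩ <;> simp) hdX
      · simp [f, hdX]
    rw [hc, hd]
    exact .refl
  · have hcd : c ∈ X ↔ d ∈ X := by
      have := hS g hg hgt
      unfold crosses at this
      rcases hor with ⟨rfl, rfl⟩ | ⟨rfl, rfl⟩ <;> tauto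
    by_cases hcX : c ∈ X
    · simp only [f, hcX, hcd.1 hcX, if_true]
      exact .single ⟨g, ⟨hg, hgt⟩, hor⟩
    · simp only [f, hcX, hcd.not.1 hcX, if_false]
      exact .refl

end Reach

section SpanningTree

variable (G) in
def IsSpanningTree (T : Set G.E) : Prop :=
  (∀ u v, G.reachOn T u v) ∧ Nat.card T = Fintype.card G.V - 1

variable (G) in
def simpleGraphOn (S : Set G.E) : SimpleGraph G.V :=
  SimpleGraph.fromRel (G.adjOn S)

lemma reachable_simpleGraphOn {S : Set G.E} {u v : G.V} (h : G.reachOn S u v) :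
    (G.simpleGraphOn S).Reachable u v := by
  rw [SimpleGraph.reachable_iff_reflTransGen]
  refine Relation.ReflTransGen.lift' id (fun c d hcd => ?_) _ _ h
  by_cases hc : c = d
  · exact hc ▸ .refl
  · exact .single ((SimpleGraph.fromRel_adj _ _ _).2 ⟨hc, .inl hcd⟩)

lemma card_edgeSet_simpleGraphOn_le (S : Set G.E) :
    Nat.card (G.simpleGraphOn S).edgeSet ≤ Nat.card S := by
  have hsub : (G.simpleGraphOn S).edgeSet ⊆ (fun e => s(G.fst e, G.snd e)) '' S := by
    rintro ⟨u, v⟩ huv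
    obtain ⟨-, ⟨e, he, hor⟩ | ⟨e, he, hor⟩⟩ := (SimpleGraph.fromRel_adj _ _ _).1 huv
    all_goals
      refine ⟨e, he, ?_⟩
      rcases hor with ⟨rfl, rfl⟩ | ⟨rfl, rfl⟩ <;> simp [Sym2.eq_swap]
  rw [Nat.card_coe_set_eq, Nat.card_coe_set_eq]
  exact (Set.ncard_le_ncard hsub (Set.toFinite _)).trans (Set.ncard_image_le (Set.toFinite S))

/-- Otherwise `T \ {t}` would be connected with fewer than `|V| - 1` edges. -/
lemma IsSpanningTree.not_reachOn_diff_singleton {T : Set G.E} (hT : G.IsSpanningTree T)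
    {t : G.E} (ht : t ∈ T) : ¬ G.reachOn (T \ {t}) (G.fst t) (G.snd t) := by
  intro h
  have : Nonempty G.V := ⟨G.fst t⟩
  have hconn : (G.simpleGraphOn (T \ {t})).Connected :=
    ⟨fun u v => reachable_simpleGraphOn (reachOn_diff_singleton_of_reachOn h (hT.1 u v))⟩
  have hV := hconn.card_vert_le_card_edgeSet_add_one
  have hE := card_edgeSet_simpleGraphOn_le (T \ {t})
  have hT' : Nat.card ↥(T \ {t}) = Nat.card T - 1 := by
    simp only [Nat.card_coe_set_eq]
    exact Set.ncard_sdiff_singleton_of_mem ht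
  have hpos : 0 < Nat.card T := Nat.card_pos_iff.2 ⟨⟨t, ht⟩, Set.toFinite T⟩
  rw [Nat.card_eq_fintype_card] at hV
  have := hT.2
  omega

lemma IsSpanningTree.crosses_setOf_reachOn {T : Set G.E} (hT : G.IsSpanningTree T) {t : G.E}
    (ht : t ∈ T) (a : G.V) : G.crosses {v | G.reachOn (T \ {t}) a v} t := by
  intro hiff
  by_cases hf : G.reachOn (T \ {t}) a (G.fst t)
  · exact hT.not_reachOn_diff_singleton ht ((reachOn_symm hf).trans (hiff.1 hf))
  · obtain ⟨g, hg, hcr⟩ := exists_crosses_of_reachOn (hT.1 a (G.fst t)) .refl hf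
    by_cases hgt : g = t
    · exact hgt ▸ hcr <| hiff
    · exact not_crosses_setOf_reachOn (S := T \ {t}) ⟨hg, hgt⟩ hcr

lemma IsSpanningTree.reachOn_diff {T C : Set G.E} (hT : G.IsSpanningTree T) (hC : C ⊆ T)
    {a b : G.V} (hb : ∀ t ∈ C, G.reachOn (T \ {t}) a b) : G.reachOn (T \ C) a b := by
  refine Set.Finite.induction_on_subset (motive := fun s _ => G.reachOn (T \ s) a b) C
    (Set.toFinite C) (by simpa using hT.1 a b) fun {t s} htC _ _ ih => ?_
  rw [← Set.union_singleton, ← Set.sdiff_sdiff]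
  exact reachOn_diff_singleton_of_crosses (hT.crosses_setOf_reachOn (hC htC) a)
    (fun g hg hgt => not_crosses_setOf_reachOn (S := T \ {t}) ⟨hg.1, hgt⟩) ih .refl (hb t htC)

end SpanningTree

section DirectedCut

variable {O : G.PartialOrientation} {X : Set G.V} {a b q : G.V} {e : G.E} {c : Bool}

lemma IsDirCut.some_eq_iff (hX : G.IsDirCut O X) (he : G.crosses X e) :
    O e = some c ↔ G.dtail e c ∈ X := by
  have hO := hX.2 e he
  unfold crosses at he
  cases c <;> by_cases hf : G.fst e ∈ X <;> simp_all [dtail]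

lemma isDirCut_of_forall_dhead_mem (hfull : ∀ e, O e ≠ none) (hcr : ∃ e, G.crosses X e)
    (hin : ∀ e c, O e = some c → G.dhead e c ∈ X → G.dtail e c ∈ X) : G.IsDirCut O X := by
  refine ⟨hcr, fun e he => ?_⟩
  obtain ⟨c, hc⟩ := Option.ne_none_iff_exists'.1 (hfull e)
  have hdir := hin e c hc
  unfold crosses at he
  cases c <;> simp only [dtail, dhead, Bool.false_eq_true, if_true, if_false] at hdir <;>
    simp only [hc, Option.some.injEq, Bool.false_eq_true, Bool.true_eq_false] <;> tauto

lemma mem_of_dReach (hX : ∀ e c, O e = some c → G.dtail e c ∈ X → G.dhead e c ∈ X)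
    (h : G.dReach O a b) (ha : a ∈ X) : b ∈ X := by
  induction h with
  | refl => exact ha
  | tail _ step ih =>
    obtain ⟨e, c, he, rfl, rfl⟩ := step
    exact hX e c he ih

lemma mem_of_isDirCut_of_forall_dReach (h : ∀ v, G.dReach O q v) (hX : G.IsDirCut O X) :
    q ∈ X := by
  obtain ⟨u, hu⟩ : ∃ u, u ∈ X := by
    obtain ⟨f, hf⟩ := hX.1
    unfold crosses at hf
    by_cases h : G.fst f ∈ X
    exacts [⟨_, h⟩, ⟨G.snd f, by tauto⟩]
  by_contra hq
  refine mem_of_dReach (X := Xᶜ) (fun e c he ht hh => ht ?_) (h u) hq hu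
  exact (hX.some_eq_iff (crosses_compl.1 (crosses_of_dtail_mem ht (by simpa using hh)))).1 he

lemma dReach_of_forall_isDirCut_mem (hG : G.Connected) (hfull : ∀ e, O e ≠ none)
    (h : ∀ X, G.IsDirCut O X → q ∈ X) (v : G.V) : G.dReach O q v := by
  by_contra hv
  let Z := {w | G.dReach O q w}
  have hq : q ∈ Z := .refl
  obtain ⟨g, -, hg⟩ := exists_crosses_of_reachOn (hG q v) hq hv
  refine h Zᶜ (isDirCut_of_forall_dhead_mem hfull ⟨g, crosses_compl.2 hg⟩ ?_) hq
  exact fun e c he hh ht => hh (Relation.ReflTransGen.tail ht ⟨e, c, he, rfl, rfl⟩)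

end DirectedCut

section ConnectedPair

variable [LinearOrder G.E]

/-- The paper's `q`-connected pair `(<, A)` with tree `T`. The tree edge `t'` descends from `t`
when removing `t` cuts the `A`-tail of `t'` off from `q`; taking `t' = t` in
`lt_of_descendant` shows that `A` orients `T` away from `q`. -/
structure IsQConnectedPair (G : Multigraph) [LinearOrder G.E] (A : G.E → Bool) (q : G.V)
    (T : Set G.E) : Prop where
  isSpanningTree : G.IsSpanningTree T
  lt_of_not_mem : ∀ t ∈ T, ∀ f, f ∉ T → t < f
  lt_of_descendant : ∀ t ∈ T, ∀ t' ∈ T, ¬ G.reachOn (T \ {t}) q (G.dtail t' (A t')) → t < t'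

variable {A : G.E → Bool} {q : G.V} {T : Set G.E} {X : Set G.V} {e : G.E}

lemma IsQConnectedPair.dtail_mem (hP : G.IsQConnectedPair A q T) (hq : q ∈ X)
    (he : G.crosses X e) (hmin : ∀ e', G.crosses X e' → e ≤ e') : G.dtail e (A e) ∈ X := by
  obtain ⟨u, hu⟩ : ∃ u, u ∉ X := by
    unfold crosses at he
    by_cases h : G.fst e ∈ X
    exacts [⟨G.snd e, by tauto⟩, ⟨_, h⟩]
  obtain ⟨t, htT, ht⟩ := exists_crosses_of_reachOn (hP.isSpanningTree.1 q u) hq hu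
  have heT : e ∈ T := by
    by_contra heT
    exact (hmin t ht).not_gt (hP.lt_of_not_mem t htT e heT)
  by_contra htail
  obtain ⟨t₀, ⟨ht₀T, ht₀⟩, hcut⟩ : ∃ t ∈ {t | t ∈ T ∧ G.crosses X t},
      ¬ G.reachOn (T \ {t}) q (G.dtail e (A e)) := by
    by_contra! hall
    have hreach := hP.isSpanningTree.reachOn_diff (fun t ht => ht.1) hall
    exact htail (mem_of_reachOn hreach (fun g hg hcr => hg.2 ⟨hg.1, hcr⟩) hq)
  exact (hmin t₀ ht₀).not_gt (hP.lt_of_descendant t₀ ht₀T e heT hcut)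

lemma IsQConnectedPair.dtail_mem_iff (hP : G.IsQConnectedPair A q T) (he : G.crosses X e)
    (hmin : ∀ e', G.crosses X e' → e ≤ e') : G.dtail e (A e) ∈ X ↔ q ∈ X := by
  refine ⟨fun h => ?_, fun hq => hP.dtail_mem hq he hmin⟩
  by_contra hq
  exact hP.dtail_mem (X := Xᶜ) hq (crosses_compl.2 he)
    (fun e' he' => hmin e' (crosses_compl.1 he')) h

lemma IsQConnectedPair.minimalCut_iff (hP : G.IsQConnectedPair A q T)
    {O : G.PartialOrientation} (hX : G.IsDirCut O X) : G.MinimalCut A O X ↔ q ∈ X := by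
  constructor
  · rintro ⟨e, he, hmin, hO⟩
    exact (hP.dtail_mem_iff he hmin).1 ((hX.some_eq_iff he).1 hO)
  · intro hq
    obtain ⟨e, he, hmin⟩ := WellFounded.has_min wellFounded_lt {e | G.crosses X e} hX.1
    have hmin' : ∀ e', G.crosses X e' → e ≤ e' := fun e' he' => not_lt.1 (hmin e' he')
    exact ⟨e, he, hmin', (hX.some_eq_iff he).2 ((hP.dtail_mem_iff he hmin').2 hq)⟩

end ConnectedPair

end Multigraph

theorem stmt13_general (G : Multigraph) [LinearOrder G.E] (A : G.E → Bool) (hG : G.Connected)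
    (q : G.V) (T : Set G.E)
    (hspan : ∀ u v, G.reachOn T u v)
    (hcard : Nat.card T = Fintype.card G.V - 1)
    (htree_first : ∀ t ∈ T, ∀ f, f ∉ T → t < f)
    (hdesc : ∀ t ∈ T, ∀ t' ∈ T, ¬ G.reachOn (T \ {t}) q (G.dtail t' (A t')) → t < t')
    (O : G.PartialOrientation) (hfull : ∀ e, O e ≠ none) :
    G.CutMinimal A O ↔ ∀ v, G.dReach O q v := by
  have hP : G.IsQConnectedPair A q T := ⟨⟨hspan, hcard⟩, htree_first, hdesc⟩
  constructor
  · intro hmin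
    exact Multigraph.dReach_of_forall_isDirCut_mem hG hfull
      fun X hX => (hP.minimalCut_iff hX).1 (hmin X hX)
  · intro hreach X hX
    exact (hP.minimalCut_iff hX).2 (Multigraph.mem_of_isDirCut_of_forall_dReach hreach hX)

/-- for a `q`-connected pair `(<, A)` (a spanning tree `T` oriented away
from the root `q` by `A`, whose edges come first in the order `<` with each tree edge
smaller than its descendants), a full orientation is cut minimal iff every vertex is
reachable from `q` by a directed path. -/
theorem stmt13 (G : Multigraph) [LinearOrder G.E] (A : G.E → Bool) (hG : G.Connected)
    (q : G.V) (T : Set G.E)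
    (hspan : ∀ u v, G.reachOn T u v)
    (hcard : Nat.card T = Fintype.card G.V - 1)
    (haway : ∀ t ∈ T, G.reachOn (T \ {t}) q (G.dtail t (A t)))
    (htree_first : ∀ t ∈ T, ∀ f, f ∉ T → t < f)
    (hdesc : ∀ t ∈ T, ∀ t' ∈ T, ¬ G.reachOn (T \ {t}) q (G.dtail t' (A t')) → t < t')
    (O : G.PartialOrientation) (hfull : ∀ e, O e ≠ none) :
    G.CutMinimal A O ↔ ∀ v, G.dReach O q v :=
  stmt13_general G A hG q T hspan hcard htree_first hdesc O hfull
end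
end

section
/- If two partial orientations of a connected multigraph have the same indegree sequence, then they are related by an edge-disjoint union of directed cycle reversals and Jacob's ladder cascades (reversals of half-open paths). -/
open Classical

noncomputable section

/-! Every edge on which `O` and `O'` differ is read as an arc from its head under `O'` to its
head under `O`, with an extra vertex `none` standing for "unoriented". Equal indegrees make this
family of arcs balanced, so it splits into edge-disjoint closed trails. If every trail through
`none` starts there, each trail either avoids `none`, and is then a directed cycle of `O` reversed
by `O'`, or leaves and re-enters `none` exactly once, and is then a half-open path of `O` whose
cascade gives `O'`. -/

theorem Multiset.eq_of_card_eq_of_count_some_eq {β : Type*} [Fintype β] [DecidableEq β]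
    {m₁ m₂ : Multiset (Option β)} (hcard : Multiset.card m₁ = Multiset.card m₂)
    (h : ∀ b, m₁.count (some b) = m₂.count (some b)) : m₁ = m₂ := by
  refine Multiset.ext.mpr fun u => ?_
  cases u with
  | some b => exact h b
  | none =>
    have h₁ := Multiset.sum_count_eq_card (s := Finset.univ) (m := m₁) (by simp)
    have h₂ := Multiset.sum_count_eq_card (s := Finset.univ) (m := m₂) (by simp)
    rw [Fintype.sum_option] at h₁ h₂
    simp only [h] at h₁
    omega

theorem List.exists_perm_append_of_forall_or {β : Type*} {T : List β} {p q : β → Prop}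
    (h : ∀ t ∈ T, p t ∨ q t) :
    ∃ L P : List β, (L ++ P).Perm T ∧ (∀ t ∈ L, p t) ∧ ∀ t ∈ P, q t := by
  refine ⟨T.filter (p ·), T.filter (fun t => !decide (p t)), T.filter_append_perm _, ?_, ?_⟩
  · simp
  · simp only [List.mem_filter, Bool.not_eq_true', decide_eq_false_iff_not, and_imp]
    exact fun t ht hp => (h t ht).resolve_left hp

namespace ArcFamily

variable {α W : Type*} (src tgt : α → W)

/-- Read `x : α` as an arc from `src x` to `tgt x`. -/
def IsBalanced (S : Finset α) : Prop := S.val.map src = S.val.map tgt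

structure IsFirstReturnTrail (a : α) (l : List α) : Prop where
  nodup : (a :: l).Nodup
  isChain : (a :: l).IsChain (fun x y => tgt x = src y)
  tgt_getLast : tgt ((a :: l).getLast (List.cons_ne_nil a l)) = src a
  src_ne : ∀ y ∈ l, src y ≠ src a

variable {src tgt}

theorem map_tgt_dropLast {a : α} {l : List α}
    (h : (a :: l).IsChain (fun x y => tgt x = src y)) :
    (a :: l).dropLast.map tgt = l.map src := by
  induction l generalizing a with
  | nil => simp
  | cons b l ih =>
    rw [List.isChain_cons_cons] at h
    rw [List.dropLast_cons_cons, List.map_cons, List.map_cons, ih h.2, h.1]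

theorem map_tgt_eq_append_getLast {a : α} {l : List α}
    (h : (a :: l).IsChain (fun x y => tgt x = src y)) :
    (a :: l).map tgt = l.map src ++ [tgt ((a :: l).getLast (List.cons_ne_nil a l))] := by
  rw [← map_tgt_dropLast h, ← List.map_singleton, ← List.map_append,
    List.dropLast_append_getLast]

theorem IsFirstReturnTrail.map_tgt_perm {a : α} {l : List α}
    (h : IsFirstReturnTrail src tgt a l) : ((a :: l).map tgt).Perm ((a :: l).map src) := by
  rw [map_tgt_eq_append_getLast h.isChain, h.tgt_getLast]
  exact List.perm_append_singleton _ _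

theorem IsFirstReturnTrail.isChain_append_head {a : α} {l : List α}
    (h : IsFirstReturnTrail src tgt a l) :
    (a :: l ++ [a]).IsChain (fun x y => tgt x = src y) := by
  refine List.isChain_append.mpr ⟨h.isChain, List.isChain_singleton a, ?_⟩
  simp [List.getLast?_eq_some_getLast (List.cons_ne_nil a l), h.tgt_getLast]

theorem IsBalanced.filter {S : Finset α} (hS : IsBalanced src tgt S) (p : α → Prop)
    [DecidablePred p] (h : ∀ x ∈ S, ¬ p x → src x = tgt x) :
    IsBalanced src tgt (S.filter p) := by
  have hrest : (S.val.filter (¬ p ·)).map src = (S.val.filter (¬ p ·)).map tgt :=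
    Multiset.map_congr rfl fun x hx =>
      h x (Multiset.mem_of_mem_filter hx) (Multiset.mem_filter.mp hx).2
  unfold IsBalanced at hS ⊢
  rw [← Multiset.filter_add_not p S.val, Multiset.map_add, Multiset.map_add, hrest] at hS
  exact add_right_cancel hS

variable [DecidableEq α]

theorem IsFirstReturnTrail.isBalanced {a : α} {l : List α}
    (h : IsFirstReturnTrail src tgt a l) : IsBalanced src tgt (a :: l).toFinset := by
  rw [IsBalanced, List.toFinset_val, h.nodup.dedup, Multiset.map_coe, Multiset.map_coe,
    Multiset.coe_eq_coe]
  exact h.map_tgt_perm.symm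

theorem IsBalanced.sdiff {S T : Finset α} (hS : IsBalanced src tgt S)
    (hT : IsBalanced src tgt T) (hTS : T ⊆ S) : IsBalanced src tgt (S \ T) := by
  have hsplit : S.val = (S \ T).val + T.val := by
    rw [Finset.sdiff_val, Multiset.sub_add_cancel (Finset.val_le_iff.mpr hTS)]
  unfold IsBalanced at hS hT ⊢
  rw [hsplit, Multiset.map_add, Multiset.map_add, hT] at hS
  exact add_right_cancel hS

variable [DecidableEq W]

/-- An open trail in a balanced set enters its last vertex once more than it leaves it,
so some unused arc of the set leaves that vertex. -/
theorem IsBalanced.exists_mem_src_eq_getLast {S : Finset α}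
    (hS : IsBalanced src tgt S) {a : α} {l : List α} (hnd : (a :: l).Nodup)
    (hsub : ∀ x ∈ a :: l, x ∈ S) (hch : (a :: l).IsChain (fun x y => tgt x = src y))
    (hopen : tgt ((a :: l).getLast (List.cons_ne_nil a l)) ≠ src a) :
    ∃ b ∈ S, b ∉ a :: l ∧ src b = tgt ((a :: l).getLast (List.cons_ne_nil a l)) := by
  generalize hu : tgt ((a :: l).getLast (List.cons_ne_nil a l)) = u at hopen ⊢
  have hT : (a :: l).toFinset.val = ↑(a :: l) := by rw [List.toFinset_val, hnd.dedup]
  have hsplit : S.val = (S \ (a :: l).toFinset).val + ↑(a :: l) := by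
    rw [Finset.sdiff_val, hT, Multiset.sub_add_cancel (hT ▸ Finset.val_le_iff.mpr fun x hx =>
      hsub x (List.mem_toFinset.mp hx))]
  have htgt : ((↑(a :: l) : Multiset α).map tgt).count u = (l.map src).count u + 1 := by
    simp [map_tgt_eq_append_getLast hch, hu]
  have hsrc : ((↑(a :: l) : Multiset α).map src).count u = (l.map src).count u := by
    simp [Ne.symm hopen]
  have hcount : (S.val.map src).count u = (S.val.map tgt).count u := by rw [hS]
  rw [hsplit, Multiset.map_add, Multiset.map_add, Multiset.count_add, Multiset.count_add, htgt,
    hsrc] at hcount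
  have hpos : 0 < ((S \ (a :: l).toFinset).val.map src).count u := by omega
  obtain ⟨b, hb, hbu⟩ := Multiset.mem_map.mp (Multiset.count_pos.mp hpos)
  rw [Finset.mem_val, Finset.mem_sdiff, List.mem_toFinset] at hb
  exact ⟨b, hb.1, hb.2, hbu⟩

theorem IsBalanced.exists_isFirstReturnTrail_append {S : Finset α}
    (hS : IsBalanced src tgt S) {a : α} {l : List α} (hnd : (a :: l).Nodup)
    (hsub : ∀ x ∈ a :: l, x ∈ S) (hch : (a :: l).IsChain (fun x y => tgt x = src y))
    (hret : ∀ y ∈ l, src y ≠ src a) :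
    ∃ m, IsFirstReturnTrail src tgt a (l ++ m) ∧ ∀ x ∈ a :: (l ++ m), x ∈ S := by
  by_cases hclosed : tgt ((a :: l).getLast (List.cons_ne_nil a l)) = src a
  · refine ⟨[], ?_, by simpa using hsub⟩
    rw [List.append_nil]
    exact ⟨hnd, hch, hclosed, hret⟩
  obtain ⟨b, hbS, hbl, hb⟩ := hS.exists_mem_src_eq_getLast hnd hsub hch hclosed
  have hnd' : (a :: (l ++ [b])).Nodup := by
    rw [← List.cons_append, List.nodup_append]
    exact ⟨hnd, List.nodup_singleton b, fun x hx y hy hxy => hbl (by simp_all)⟩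
  have hsub' : ∀ x ∈ a :: (l ++ [b]), x ∈ S := by
    intro x hx
    rw [← List.cons_append, List.mem_append, List.mem_singleton] at hx
    exact hx.elim (hsub x) (· ▸ hbS)
  have hch' : (a :: (l ++ [b])).IsChain (fun x y => tgt x = src y) := by
    rw [← List.cons_append, List.isChain_append]
    simp [List.getLast?_eq_some_getLast (List.cons_ne_nil a l), hch, hb]
  have hret' : ∀ y ∈ l ++ [b], src y ≠ src a := by
    simpa [or_imp, forall_and, hb] using ⟨hret, hclosed⟩
  have : S.card - (l ++ [b]).length < S.card - l.length := by
    have := List.toFinset_card_of_nodup hnd'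
    have := Finset.card_le_card (s := (a :: (l ++ [b])).toFinset) fun x hx =>
      hsub' x (List.mem_toFinset.mp hx)
    simp_all only [List.length_cons, List.length_append]
    omega
  obtain ⟨m, htr, hmS⟩ := hS.exists_isFirstReturnTrail_append hnd' hsub' hch' hret'
  exact ⟨b :: m, by simpa using htr, by simpa using hmS⟩
termination_by S.card - l.length

theorem IsBalanced.exists_isFirstReturnTrail {S : Finset α} (hS : IsBalanced src tgt S)
    {a : α} (ha : a ∈ S) :
    ∃ l, IsFirstReturnTrail src tgt a l ∧ ∀ x ∈ a :: l, x ∈ S := by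
  simpa using hS.exists_isFirstReturnTrail_append (l := []) (by simp) (by simpa using ha)
    (by simp) (by simp)

theorem IsBalanced.exists_decomposition {S : Finset α} (w₀ : W) (hS : IsBalanced src tgt S) :
    ∃ T : List (List α), T.flatten.Nodup ∧ (∀ x, x ∈ T.flatten ↔ x ∈ S) ∧
      ∀ t ∈ T, ∃ a l, t = a :: l ∧ IsFirstReturnTrail src tgt a l ∧
        (src a = w₀ ∨ ∀ x ∈ t, src x ≠ w₀) := by
  rcases S.eq_empty_or_nonempty with rfl | hne
  · exact ⟨[], by simp, by simp, by simp⟩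
  obtain ⟨a, haS, ha⟩ : ∃ a ∈ S, src a = w₀ ∨ ∀ x ∈ S, src x ≠ w₀ := by
    by_cases h : ∃ a ∈ S, src a = w₀
    · obtain ⟨a, haS, ha⟩ := h
      exact ⟨a, haS, .inl ha⟩
    · push Not at h
      obtain ⟨a, haS⟩ := hne
      exact ⟨a, haS, .inr h⟩
  obtain ⟨l, htr, hsub⟩ := hS.exists_isFirstReturnTrail haS
  have hTS : (a :: l).toFinset ⊆ S := fun x hx => hsub x (List.mem_toFinset.mp hx)
  have : (S \ (a :: l).toFinset).card < S.card :=
    Finset.card_lt_card (Finset.sdiff_ssubset hTS ⟨a, by simp⟩)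
  obtain ⟨R, hRnd, hRmem, hRtr⟩ := (hS.sdiff htr.isBalanced hTS).exists_decomposition w₀
  refine ⟨(a :: l) :: R, ?_, fun x => ?_, ?_⟩
  · rw [List.flatten_cons, List.nodup_append]
    refine ⟨htr.nodup, hRnd, fun x hx y hy hxy => ?_⟩
    have := (hRmem y).mp hy
    simp_all
  · have := hsub x
    simp only [List.flatten_cons, List.mem_append, hRmem, Finset.mem_sdiff, List.mem_toFinset]
    tauto
  · exact List.forall_mem_cons.mpr
      ⟨⟨a, l, rfl, htr, ha.imp_right fun h x hx => h x (hsub x hx)⟩, hRtr⟩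
termination_by S.card
decreasing_by simpa using this

end ArcFamily

namespace Multigraph

variable {G : Multigraph}

def headIn (O : G.PartialOrientation) (e : G.E) : Option G.V := (O e).map (G.dhead e)

variable {O O' : G.PartialOrientation}

theorem indeg_eq_count_headIn (v : G.V) :
    G.indeg O v = (Finset.univ.val.map (G.headIn O)).count (some v) := by
  rw [indeg, Nat.card_eq_fintype_card, Fintype.card_subtype, Multiset.count_map]
  simp only [headIn, Option.map_eq_some_iff, eq_comm]
  rfl

theorem map_headIn_eq_of_indeg_eq (hdeg : ∀ v, G.indeg O v = G.indeg O' v) :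
    Finset.univ.val.map (G.headIn O') = Finset.univ.val.map (G.headIn O) :=
  Multiset.eq_of_card_eq_of_count_some_eq (by simp) fun v => by
    rw [← indeg_eq_count_headIn, ← indeg_eq_count_headIn, hdeg]

theorem isBalanced_headIn (hdeg : ∀ v, G.indeg O v = G.indeg O' v) :
    ArcFamily.IsBalanced (G.headIn O') (G.headIn O) (Finset.univ.filter fun e => O' e ≠ O e) :=
  ArcFamily.IsBalanced.filter (S := Finset.univ) (map_headIn_eq_of_indeg_eq hdeg) _
    fun e _ he => by rw [headIn, headIn, not_not.mp he]

/-- An edge on which `O` and `O'` differ is traversed along its `O`-orientation, or against its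
`O'`-orientation when `O` leaves it unoriented. -/
def diffStep (O O' : G.PartialOrientation) (e : G.E) : G.E × Bool :=
  (e, (O e).getD (!((O' e).getD true)))

theorem eq_some_diffStep {e : G.E} (h : O e ≠ none) : O e = some (diffStep O O' e).2 := by
  obtain ⟨b, hb⟩ := Option.ne_none_iff_exists'.mp h
  simp [diffStep, hb]

theorem eq_some_not_diffStep {e : G.E} (hne : O' e ≠ O e) (h : O' e ≠ none) :
    O' e = some !(diffStep O O' e).2 := by
  obtain ⟨b, hb⟩ := Option.ne_none_iff_exists'.mp h
  cases hO : O e with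
  | none => simp [diffStep, hO, hb]
  | some c => rw [hb, hO] at hne; cases b <;> cases c <;> simp_all [diffStep]

theorem dhead_not (e : G.E) (b : Bool) : G.dhead e (!b) = G.dtail e b := by
  cases b <;> rfl

theorem dhead_diffStep_eq_dtail {x y : G.E} (hy : O' y ≠ O y) (hy' : O' y ≠ none)
    (hxy : G.headIn O x = G.headIn O' y) :
    G.dhead x (diffStep O O' x).2 = G.dtail y (diffStep O O' y).2 := by
  have hx : O x ≠ none := fun h => hy' (by simpa [headIn, h, eq_comm] using hxy)
  rw [headIn, headIn, eq_some_diffStep hx, eq_some_not_diffStep hy hy', Option.map_some,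
    Option.map_some, dhead_not] at hxy
  exact Option.some.inj hxy

theorem map_fst_map_diffStep (t : List G.E) : (t.map (diffStep O O')).map Prod.fst = t := by
  simp [Function.comp_def, diffStep]

variable (O O')

def IsReversedDCycle (c : List (G.E × Bool)) : Prop :=
  G.IsDCycle O c ∧ ∀ s ∈ c, O' s.1 = some (!s.2)

def IsCascadedPath (p : List (G.E × Bool)) : Prop :=
  G.IsHalfOpenPath O p ∧ (∀ h : p ≠ [], O' (p.head h).1 = none) ∧
    ∀ s ∈ p.tail, O' s.1 = some (!s.2)

variable {O O'}

theorem isReversedDCycle_map_diffStep {a : G.E} {l : List G.E}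
    (htr : ArcFamily.IsFirstReturnTrail (G.headIn O') (G.headIn O) a l)
    (hdiff : ∀ x ∈ a :: l, O' x ≠ O x) (horiented : ∀ x ∈ a :: l, O' x ≠ none) :
    G.IsReversedDCycle O O' ((a :: l).map (diffStep O O')) := by
  have hO : ∀ x ∈ a :: l, O x ≠ none := by
    intro x hx h
    obtain ⟨y, hy, hxy⟩ := List.mem_map.mp (htr.map_tgt_perm.subset (List.mem_map_of_mem hx))
    exact horiented y hy (by simpa [headIn, h] using hxy)
  have hcycle : (a :: l).map (diffStep O O') ++ ((a :: l).map (diffStep O O')).take 1 =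
      (a :: l ++ [a]).map (diffStep O O') := by
    simp
  refine ⟨⟨by simp, List.forall_mem_map.mpr fun x hx => eq_some_diffStep (hO x hx), ?_,
    by rw [map_fst_map_diffStep]; exact htr.nodup⟩,
    List.forall_mem_map.mpr fun x hx => eq_some_not_diffStep (hdiff x hx) (horiented x hx)⟩
  rw [List.Chain', hcycle, List.isChain_map]
  refine htr.isChain_append_head.imp_of_mem_imp fun x y _ hy hxy => ?_
  have hy : y ∈ a :: l :=
    (List.mem_append.mp hy).elim id fun h => List.mem_singleton.mp h ▸ List.mem_cons_self
  exact dhead_diffStep_eq_dtail (hdiff y hy) (horiented y hy) hxy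

theorem isCascadedPath_map_diffStep {a : G.E} {l : List G.E}
    (htr : ArcFamily.IsFirstReturnTrail (G.headIn O') (G.headIn O) a l)
    (hdiff : ∀ x ∈ a :: l, O' x ≠ O x) (ha : O' a = none) :
    G.IsCascadedPath O O' ((a :: l).map (diffStep O O')) := by
  have hsrc : ∀ y ∈ l, O' y ≠ none := fun y hy h =>
    htr.src_ne y hy (by simp [headIn, h, ha])
  have hlast : O ((a :: l).getLast (List.cons_ne_nil a l)) = none := by
    simpa [headIn, ha] using htr.tgt_getLast
  have hl : l ≠ [] := by
    rintro rfl
    exact hdiff a (by simp) (ha.trans (by simpa using hlast.symm))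
  have hdropLast : ∀ x ∈ (a :: l).dropLast, O x ≠ none := by
    intro x hx h
    obtain ⟨y, hy, hxy⟩ := List.mem_map.mp
      (ArcFamily.map_tgt_dropLast htr.isChain ▸ List.mem_map_of_mem (f := G.headIn O) hx)
    exact hsrc y hy (by simpa [headIn, h] using hxy)
  refine ⟨⟨?_, ?_, by rw [map_fst_map_diffStep]; exact htr.nodup, ?_, fun _ => ?_⟩,
    fun _ => ha, List.forall_mem_map.mpr fun y hy =>
      eq_some_not_diffStep (hdiff y (List.mem_cons_of_mem a hy)) (hsrc y hy)⟩
  · obtain ⟨b, l', rfl⟩ := List.exists_cons_of_ne_nil hl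
    simp
  · rw [List.Chain', List.isChain_map]
    refine htr.isChain.imp_of_mem_tail_imp fun x y _ hy hxy => ?_
    exact dhead_diffStep_eq_dtail (hdiff y (List.mem_of_mem_tail hy)) (hsrc y hy) hxy
  · rw [← List.map_dropLast]
    exact List.forall_mem_map.mpr fun x hx => eq_some_diffStep (hdropLast x hx)
  · rw [List.getLast_map]
    exact hlast

theorem isReversedDCycle_or_isCascadedPath {a : G.E} {l : List G.E}
    (htr : ArcFamily.IsFirstReturnTrail (G.headIn O') (G.headIn O) a l)
    (hdiff : ∀ x ∈ a :: l, O' x ≠ O x)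
    (hbase : G.headIn O' a = none ∨ ∀ x ∈ a :: l, G.headIn O' x ≠ none) :
    G.IsReversedDCycle O O' ((a :: l).map (diffStep O O')) ∨
      G.IsCascadedPath O O' ((a :: l).map (diffStep O O')) := by
  rcases hbase with ha | hall
  · exact .inr (isCascadedPath_map_diffStep htr hdiff (by simpa [headIn] using ha))
  · exact .inl (isReversedDCycle_map_diffStep htr hdiff fun x hx => by
      simpa [headIn] using hall x hx)

theorem exists_trails_of_indeg_eq (hdeg : ∀ v, G.indeg O v = G.indeg O' v) :
    ∃ T : List (List G.E), T.Pairwise List.Disjoint ∧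
      (∀ e, (∃ t ∈ T, e ∈ t) ↔ O' e ≠ O e) ∧
      ∀ t ∈ T, G.IsReversedDCycle O O' (t.map (diffStep O O')) ∨
        G.IsCascadedPath O O' (t.map (diffStep O O')) := by
  obtain ⟨T, hnd, hmem, htrails⟩ := (isBalanced_headIn hdeg).exists_decomposition none
  have hmem' : ∀ e, (∃ t ∈ T, e ∈ t) ↔ O' e ≠ O e := fun e => by
    simpa [List.mem_flatten] using hmem e
  refine ⟨T, (List.nodup_flatten.mp hnd).2, hmem', fun t ht => ?_⟩
  obtain ⟨a, l, rfl, htr, hbase⟩ := htrails t ht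
  exact isReversedDCycle_or_isCascadedPath htr (fun x hx => (hmem' x).mp ⟨_, ht, hx⟩) hbase

end Multigraph

theorem stmt14_general (G : Multigraph) (O O' : G.PartialOrientation)
    (hdeg : ∀ v, G.indeg O v = G.indeg O' v) :
    ∃ L P : List (List (G.E × Bool)),
      (∀ c ∈ L, G.IsDCycle O c) ∧ (∀ p ∈ P, G.IsHalfOpenPath O p) ∧
      (L ++ P).Pairwise (fun a b => ∀ e, e ∈ a.map Prod.fst → e ∉ b.map Prod.fst) ∧
      (∀ e, (∀ w ∈ L ++ P, e ∉ w.map Prod.fst) → O' e = O e) ∧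
      (∀ c ∈ L, ∀ s ∈ c, O' s.1 = some (!s.2)) ∧
      (∀ p ∈ P, ∀ h : p ≠ [], O' (p.head h).1 = none) ∧
      (∀ p ∈ P, ∀ s ∈ p.tail, O' s.1 = some (!s.2)) := by
  obtain ⟨T, hdisj, hmem, htrails⟩ := Multigraph.exists_trails_of_indeg_eq hdeg
  obtain ⟨C, P, hperm, hC, hP⟩ := List.exists_perm_append_of_forall_or htrails
  refine ⟨C.map (List.map (Multigraph.diffStep O O')),
    P.map (List.map (Multigraph.diffStep O O')),
    List.forall_mem_map.mpr fun c hc => (hC c hc).1,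
    List.forall_mem_map.mpr fun p hp => (hP p hp).1, ?_, ?_,
    List.forall_mem_map.mpr fun c hc => (hC c hc).2,
    List.forall_mem_map.mpr fun p hp => (hP p hp).2.1,
    List.forall_mem_map.mpr fun p hp => (hP p hp).2.2⟩
  · rw [← List.map_append, List.pairwise_map,
      hperm.pairwise_iff fun h e he₁ he₂ => h e he₂ he₁]
    refine hdisj.imp fun h e => ?_
    rw [Multigraph.map_fst_map_diffStep, Multigraph.map_fst_map_diffStep]
    exact fun he₁ he₂ => h he₁ he₂
  · intro e he
    by_contra hne
    obtain ⟨t, ht, het⟩ := (hmem e).mpr hne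
    rw [← List.map_append] at he
    refine he _ (List.mem_map_of_mem (hperm.symm.subset ht)) ?_
    rwa [Multigraph.map_fst_map_diffStep]

/-- two partial orientations with the same indegree sequence are related by
an edge-disjoint union of directed cycle reversals and Jacob's ladder cascades. -/
theorem stmt14 (G : Multigraph) (hG : G.Connected) (O O' : G.PartialOrientation)
    (hdeg : ∀ v, G.indeg O v = G.indeg O' v) :
    ∃ L P : List (List (G.E × Bool)),
      (∀ c ∈ L, G.IsDCycle O c) ∧ (∀ p ∈ P, G.IsHalfOpenPath O p) ∧
      (L ++ P).Pairwise (fun a b => ∀ e, e ∈ a.map Prod.fst → e ∉ b.map Prod.fst) ∧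
      (∀ e, (∀ w ∈ L ++ P, e ∉ w.map Prod.fst) → O' e = O e) ∧
      (∀ c ∈ L, ∀ s ∈ c, O' s.1 = some (!s.2)) ∧
      (∀ p ∈ P, ∀ h : p ≠ [], O' (p.head h).1 = none) ∧
      (∀ p ∈ P, ∀ s ∈ p.tail, O' s.1 = some (!s.2)) :=
  stmt14_general G O O' hdeg
end
end
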